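/- arXiv:1008.3217 — 2 statements merged into one kernel-verified Lean document; each statement's English description precedes it below -/
import Mathlib

section
/- For any natural number m, there exists an m-connected graph G such that γ'_s(G) ≤ −(m/6)·|V(G)|. In particular, Xu's conjecture that every 2-connected graph G of order n ≥ 2 satisfies γ'_s(G) ≥ 1 is false. -/
open scoped Classical

noncomputable def edgeFin {V : Type*} [Fintype V] (G : SimpleGraph V) : Finset (Sym2 V) :=
  Finset.univ.filter (· ∈ G.edgeSet)

noncomputable def closedNbhd {V : Type*} [Fintype V] (G : SimpleGraph V) (e : Sym2 V) :
    Finset (Sym2 V) :=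
  (edgeFin G).filter (fun e' => ∃ v, v ∈ e ∧ v ∈ e')

def IsSEDF {V : Type*} [Fintype V] (G : SimpleGraph V) (f : Sym2 V → ℤ) : Prop :=
  (∀ e ∈ edgeFin G, f e = 1 ∨ f e = -1) ∧
  ∀ e ∈ edgeFin G, 1 ≤ ∑ e' ∈ closedNbhd G e, f e'

noncomputable def vsum {V : Type*} [Fintype V] (G : SimpleGraph V) (f : Sym2 V → ℤ) (v : V) : ℤ :=
  ∑ e ∈ (edgeFin G).filter (fun e => v ∈ e), f e

noncomputable def gammaS {V : Type*} [Fintype V] (G : SimpleGraph V) : ℤ :=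
  sInf {z : ℤ | ∃ f, IsSEDF G f ∧ z = ∑ e ∈ edgeFin G, f e}

def IsLGraph {V : Type*} [Fintype V] (m n : ℕ) (G : SimpleGraph V) : Prop :=
  Fintype.card V = (n + 1) * (m * n + m + 1) ∧
  ∃ P : Fin (n + 1) → Finset V,
    (∀ v : V, ∃! i, v ∈ P i) ∧
    (∀ i, (P i).card = m * n + m + 1) ∧
    (∀ u ∈ P 0, ∀ v ∈ P 0, u ≠ v → G.Adj u v) ∧
    (∀ i, i ≠ 0 → ∀ u ∈ P i, ∀ v ∈ P i, ¬ G.Adj u v) ∧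
    (∀ i, i ≠ 0 → ∀ v ∈ P i, ((P 0).filter (G.Adj v)).card = m) ∧
    (∀ i, i ≠ 0 → ∀ v ∈ P 0, ((P i).filter (G.Adj v)).card = m) ∧
    (∀ i j, i ≠ 0 → j ≠ 0 → i ≠ j → ∀ u ∈ P i, ∀ v ∈ P j, ¬ G.Adj u v)

def MConnected {V : Type*} [Fintype V] (m : ℕ) (G : SimpleGraph V) : Prop :=
  m < Fintype.card V ∧
  ∀ S : Finset V, S.card < m → (G.induce ((↑S : Set V)ᶜ)).Connected

def IsElementary {V : Type*} (H : SimpleGraph V) : Prop :=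
  (∀ v, (H.neighborSet v).ncard ≤ 2) ∧
  ∀ v, (H.neighborSet v).ncard = 1 → ∀ w, H.Adj v w → (H.neighborSet w).ncard = 1


/-!
Take a clique on `6m` vertices split into six columns of `m` vertices, and add `24m` outer
vertices, `4m` per column, each joined exactly to the `m` clique vertices of its column.
Deleting fewer than `m` vertices leaves a clique vertex in every column, so every survivor is
joined to the surviving part of the clique and the graph is `m`-connected. Weight clique edges
`+1` and all other edges `-1`: a clique vertex has weight sum `(6m - 1) - 4m = 2m - 1` and an
outer vertex `-m`, so the closed neighbourhood of an edge weighs `4m - 3` or `m`, both at least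
`1`, while the total weight is `-(6m² + 3m) ≤ -(m/6) · 30m`.
-/

open Finset SimpleGraph

section EdgeSums

variable {V : Type*} [Fintype V] (G : SimpleGraph V)

lemma mem_edgeFin {e : Sym2 V} : e ∈ edgeFin G ↔ e ∈ G.edgeSet := by
  simp [edgeFin]

lemma gammaS_le_sum {f : Sym2 V → ℤ} (hf : IsSEDF G f) : gammaS G ≤ ∑ e ∈ edgeFin G, f e := by
  refine csInf_le ⟨-#(edgeFin G), ?_⟩ ⟨f, hf, rfl⟩
  rintro _ ⟨g, hg, rfl⟩
  have : ∀ e ∈ edgeFin G, -1 ≤ g e := fun e he => by rcases hg.1 e he with h | h <;> omega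
  simpa using sum_le_sum this

lemma filter_mem_edgeFin (v : V) :
    {e ∈ edgeFin G | v ∈ e} = (G.neighborFinset v).image (fun w => s(v, w)) := by
  ext e
  simp only [mem_filter, mem_edgeFin, mem_image, mem_neighborFinset]
  constructor
  · rintro ⟨he, hv⟩
    refine ⟨Sym2.Mem.other' hv, ?_, Sym2.other_spec' hv⟩
    rwa [← mem_edgeSet, Sym2.other_spec' hv]
  · rintro ⟨w, hw, rfl⟩
    exact ⟨hw, Sym2.mem_mk_left _ _⟩

lemma vsum_eq_sum_neighborFinset (f : Sym2 V → ℤ) (v : V) :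
    vsum G f v = ∑ w ∈ G.neighborFinset v, f s(v, w) := by
  rw [vsum, filter_mem_edgeFin, sum_image fun _ _ _ _ => Sym2.congr_right.mp]

lemma sum_closedNbhd_mk (f : Sym2 V → ℤ) {a b : V} (hab : G.Adj a b) :
    ∑ e ∈ closedNbhd G s(a, b), f e = vsum G f a + vsum G f b - f s(a, b) := by
  have hunion : closedNbhd G s(a, b) = {e ∈ edgeFin G | a ∈ e} ∪ {e ∈ edgeFin G | b ∈ e} := by
    ext e
    simp only [closedNbhd, mem_filter, mem_union, Sym2.mem_iff, exists_eq_or_imp, exists_eq_left]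
    tauto
  have hinter : {e ∈ edgeFin G | a ∈ e} ∩ {e ∈ edgeFin G | b ∈ e} = {s(a, b)} := by
    ext e
    simp only [mem_inter, mem_filter, mem_singleton, mem_edgeFin]
    constructor
    · rintro ⟨⟨-, ha⟩, -, hb⟩
      exact (Sym2.mem_and_mem_iff hab.ne).mp ⟨ha, hb⟩
    · rintro rfl
      exact ⟨⟨hab, Sym2.mem_mk_left a b⟩, hab, Sym2.mem_mk_right a b⟩
  have hsum := sum_union_inter (s₁ := {e ∈ edgeFin G | a ∈ e}) (s₂ := {e ∈ edgeFin G | b ∈ e})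
    (f := f)
  rw [hinter, sum_singleton, ← hunion] at hsum
  rw [vsum, vsum]
  omega

lemma two_mul_sum_edgeFin (f : Sym2 V → ℤ) : 2 * ∑ e ∈ edgeFin G, f e = ∑ v, vsum G f v := by
  have hcard : ∀ e ∈ edgeFin G, #{v | v ∈ e} = 2 := by
    intro e he
    induction e using Sym2.ind with
    | _ a b =>
      have hab : a ≠ b := ((mem_edgeFin G).mp he).ne
      rw [show ({v | v ∈ s(a, b)} : Finset V) = {a, b} by ext; simp, card_pair hab]
  calc 2 * ∑ e ∈ edgeFin G, f e = ∑ e ∈ edgeFin G, ∑ v, if v ∈ e then f e else 0 := by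
        rw [mul_sum]
        refine sum_congr rfl fun e he => ?_
        rw [← sum_filter, sum_const, hcard e he, two_smul, two_mul]
    _ = ∑ v, vsum G f v := by
        rw [sum_comm]
        simp only [vsum, sum_filter]

lemma isSEDF_of_vsum {f : Sym2 V → ℤ} (hf : ∀ e ∈ edgeFin G, f e = 1 ∨ f e = -1)
    (hadj : ∀ a b, G.Adj a b → 1 ≤ vsum G f a + vsum G f b - f s(a, b)) : IsSEDF G f := by
  refine ⟨hf, fun e he => ?_⟩
  induction e using Sym2.ind with
  | _ a b =>
    have hab : G.Adj a b := (mem_edgeFin G).mp he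
    rw [sum_closedNbhd_mk G f hab]
    exact hadj a b hab

end EdgeSums

section Comap

variable {V W : Type*} (ε : W ≃ V)

lemma sum_sym2Map_eq_of_mem_iff {M : Type*} [AddCommMonoid M] {s : Finset (Sym2 W)}
    {t : Finset (Sym2 V)} (hst : ∀ e, e ∈ s ↔ e.map ε ∈ t) (f : Sym2 V → M) :
    ∑ e ∈ s, f (e.map ε) = ∑ e ∈ t, f e := by
  have left_inv (e : Sym2 W) : (e.map ε).map ε.symm = e := by simp [Sym2.map_map]
  have right_inv (e : Sym2 V) : (e.map ε.symm).map ε = e := by simp [Sym2.map_map]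
  refine sum_nbij' (Sym2.map ε) (Sym2.map ε.symm) (fun e he => (hst e).mp he)
    (fun e he => (hst _).mpr ((right_inv e).symm ▸ he)) (fun e _ => left_inv e)
    (fun e _ => right_inv e) (fun _ _ => rfl)

variable [Fintype V] [Fintype W] (G : SimpleGraph V)

lemma mem_edgeFin_comap_iff {e : Sym2 W} : e ∈ edgeFin (G.comap ε) ↔ e.map ε ∈ edgeFin G := by
  induction e using Sym2.ind with
  | _ a b => simp [mem_edgeFin]

lemma mem_closedNbhd_comap_iff {e e' : Sym2 W} :
    e' ∈ closedNbhd (G.comap ε) e ↔ e'.map ε ∈ closedNbhd G (e.map ε) := by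
  induction e using Sym2.ind with
  | _ a b =>
    induction e' using Sym2.ind with
    | _ c d => simp [closedNbhd, mem_edgeFin, Sym2.mem_iff]

lemma IsSEDF.comap {f : Sym2 V → ℤ} (hf : IsSEDF G f) :
    IsSEDF (G.comap ε) (fun e => f (e.map ε)) := by
  refine ⟨fun e he => hf.1 _ ((mem_edgeFin_comap_iff ε G).mp he), fun e he => ?_⟩
  rw [sum_sym2Map_eq_of_mem_iff ε (fun _ => mem_closedNbhd_comap_iff ε G)]
  exact hf.2 _ ((mem_edgeFin_comap_iff ε G).mp he)

lemma sedfSums_subset_comap :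
    {z | ∃ f, IsSEDF G f ∧ z = ∑ e ∈ edgeFin G, f e} ⊆
      {z | ∃ f, IsSEDF (G.comap ε) f ∧ z = ∑ e ∈ edgeFin (G.comap ε), f e} := by
  rintro _ ⟨f, hf, rfl⟩
  exact ⟨_, hf.comap ε G, (sum_sym2Map_eq_of_mem_iff ε (fun _ => mem_edgeFin_comap_iff ε G) f).symm⟩

lemma gammaS_comap_equiv : gammaS (G.comap ε) = gammaS G := by
  have hG : (G.comap ε).comap ε.symm = G := by simp
  refine congrArg sInf (subset_antisymm ?_ (sedfSums_subset_comap ε G))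
  simpa only [hG] using sedfSums_subset_comap ε.symm (G.comap ε)

end Comap

section Connectivity

variable {V W : Type*} {G : SimpleGraph V} {m : ℕ}

lemma induce_compl_connected_of_isClique {T : Finset V} (hT : G.IsClique (T : Set V))
    (hTm : m ≤ #T) (hadj : ∀ v ∉ T, m ≤ #{w ∈ T | G.Adj v w}) {S : Finset V} (hS : #S < m) :
    (G.induce (↑S)ᶜ).Connected := by
  have near_core : ∀ v ∉ S, ∃ t ∈ T, t ∉ S ∧ (v = t ∨ G.Adj v t) := by
    intro v hv
    by_cases hvT : v ∈ T
    · exact ⟨v, hvT, hv, Or.inl rfl⟩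
    · obtain ⟨t, ht, htS⟩ := exists_mem_notMem_of_card_lt_card (hS.trans_le (hadj v hvT))
      rw [mem_filter] at ht
      exact ⟨t, ht.1, htS, Or.inr ht.2⟩
  have reach (x y : ↥(↑S : Set V)ᶜ) (h : (x : V) = y ∨ G.Adj x y) :
      (G.induce (↑S)ᶜ).Reachable x y := by
    rcases h with h | h
    · rw [Subtype.ext h]
    · exact Adj.reachable h
  obtain ⟨t₀, ht₀T, ht₀S⟩ := exists_mem_notMem_of_card_lt_card (hS.trans_le hTm)
  refine (connected_iff_exists_forall_reachable _).mpr ⟨⟨t₀, ht₀S⟩, fun v => ?_⟩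
  obtain ⟨t, htT, htS, hvt⟩ := near_core v v.2
  exact (reach ⟨t₀, ht₀S⟩ ⟨t, htS⟩ ((eq_or_ne t₀ t).imp id (hT ht₀T htT))).trans
    (reach v ⟨t, htS⟩ hvt).symm

variable [Fintype V] [Fintype W]

lemma MConnected.mono {n : ℕ} (h : MConnected m G) (hnm : n ≤ m) : MConnected n G :=
  ⟨hnm.trans_lt h.1, fun S hS => h.2 S (hS.trans_le hnm)⟩

lemma MConnected.comap_equiv (h : MConnected m G) (ε : W ≃ V) : MConnected m (G.comap ε) := by
  refine ⟨by rw [Fintype.card_congr ε]; exact h.1, fun S hS => ?_⟩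
  have hconn := h.2 (S.map ε.toEmbedding) (by simpa using hS)
  let iso : (G.comap ε).induce (↑S)ᶜ ≃g G.induce (↑(S.map ε.toEmbedding))ᶜ :=
    { toEquiv := ε.subtypeEquiv (by simp)
      map_rel_iff' := Iff.rfl }
  exact iso.connected_iff.mpr hconn

end Connectivity

noncomputable def insideSign {V : Type*} (T : Finset V) (e : Sym2 V) : ℤ :=
  if e ∈ T.sym2 then 1 else -1

def columnGraph (m : ℕ) : SimpleGraph ((Fin 6 × Fin m) ⊕ (Fin 4 × Fin 6 × Fin m)) where
  Adj
    | .inl a, .inl b => a ≠ b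
    | .inl a, .inr b => a.1 = b.2.1
    | .inr a, .inl b => a.2.1 = b.1
    | .inr _, .inr _ => False
  symm := ⟨by rintro (a | a) (b | b) h <;> simp_all [eq_comm]⟩
  loopless := ⟨by rintro (a | a) h <;> simp_all⟩

namespace columnGraph

variable (m : ℕ)

@[simp] lemma adj_inl_inl {a b : Fin 6 × Fin m} :
    (columnGraph m).Adj (.inl a) (.inl b) ↔ a ≠ b :=
  Iff.rfl

@[simp] lemma adj_inl_inr {a : Fin 6 × Fin m} {b : Fin 4 × Fin 6 × Fin m} :
    (columnGraph m).Adj (.inl a) (.inr b) ↔ a.1 = b.2.1 :=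
  Iff.rfl

@[simp] lemma adj_inr_inl {a : Fin 4 × Fin 6 × Fin m} {b : Fin 6 × Fin m} :
    (columnGraph m).Adj (.inr a) (.inl b) ↔ a.2.1 = b.1 :=
  Iff.rfl

@[simp] lemma not_adj_inr_inr {a b : Fin 4 × Fin 6 × Fin m} :
    ¬(columnGraph m).Adj (.inr a) (.inr b) :=
  id

abbrev core : Finset ((Fin 6 × Fin m) ⊕ (Fin 4 × Fin 6 × Fin m)) := univ.map .inl

lemma neighborFinset_inl (c : Fin 6) (j : Fin m) :
    (columnGraph m).neighborFinset (.inl (c, j)) =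
      (univ.erase (c, j)).disjSum (univ ×ˢ {c} ×ˢ univ) := by
  ext (w | w) <;> simp [eq_comm, Prod.ext_iff]

lemma neighborFinset_inr (b : Fin 4 × Fin 6 × Fin m) :
    (columnGraph m).neighborFinset (.inr b) = ({b.2.1} ×ˢ univ).disjSum ∅ := by
  ext (w | w) <;> simp [eq_comm, Prod.ext_iff]

lemma vsum_inl (a : Fin 6 × Fin m) :
    vsum (columnGraph m) (insideSign (core m)) (.inl a) = 2 * m - 1 := by
  have hm : 0 < m := a.2.pos
  rw [vsum_eq_sum_neighborFinset, neighborFinset_inl, sum_disjSum]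
  simp [insideSign]
  omega

lemma vsum_inr (b : Fin 4 × Fin 6 × Fin m) :
    vsum (columnGraph m) (insideSign (core m)) (.inr b) = -m := by
  rw [vsum_eq_sum_neighborFinset, neighborFinset_inr, sum_disjSum]
  simp [insideSign]

lemma isSEDF_insideSign : IsSEDF (columnGraph m) (insideSign (core m)) := by
  refine isSEDF_of_vsum _ (fun e _ => by unfold insideSign; split_ifs <;> simp) ?_
  rintro (a | a) (b | b) hadj
  · have := a.2.pos
    simp [vsum_inl, insideSign]
    omega
  · have := a.2.pos
    simp [vsum_inl, vsum_inr, insideSign]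
    omega
  · have := b.2.pos
    simp [vsum_inl, vsum_inr, insideSign]
    omega
  · exact absurd hadj (not_adj_inr_inr m)

lemma sum_insideSign :
    ∑ e ∈ edgeFin (columnGraph m), insideSign (core m) e = -(6 * m ^ 2 + 3 * m) := by
  have h := two_mul_sum_edgeFin (columnGraph m) (insideSign (core m))
  simp [Fintype.sum_sum_type, vsum_inl, vsum_inr] at h
  linarith

lemma mConnected (hm : 0 < m) : MConnected m (columnGraph m) := by
  refine ⟨by simp; omega, fun S hS =>
    induce_compl_connected_of_isClique (T := core m) ?_ ?_ ?_ hS⟩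
  · simp [IsClique, Set.Pairwise]
  · simp; omega
  · rintro (a | b) hv
    · simp at hv
    · have hcol : {w ∈ core m | (columnGraph m).Adj (.inr b) w} =
          ({b.2.1} ×ˢ (univ : Finset (Fin m))).map .inl := by
        ext (w | w) <;> simp [eq_comm, Prod.ext_iff]
      simp [hcol]

end columnGraph

theorem exists_mConnected_gammaS_le (m : ℕ) (hm : 0 < m) :
    ∃ G : SimpleGraph (Fin (30 * m)), MConnected m G ∧ gammaS G ≤ -(6 * m ^ 2 + 3 * m) := by
  have hcard : Fintype.card ((Fin 6 × Fin m) ⊕ (Fin 4 × Fin 6 × Fin m)) = 30 * m := by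
    simp only [Fintype.card_sum, Fintype.card_prod, Fintype.card_fin]
    ring
  let ε := (Fintype.equivFinOfCardEq hcard).symm
  refine ⟨(columnGraph m).comap ε, (columnGraph.mConnected m hm).comap_equiv ε, ?_⟩
  rw [gammaS_comap_equiv, ← columnGraph.sum_insideSign m]
  exact gammaS_le_sum _ (columnGraph.isSEDF_insideSign m)

theorem exists_mConnected_gammaS_le_neg_mul_card (m : ℕ) :
    ∃ (k : ℕ) (G : SimpleGraph (Fin k)), MConnected m G ∧ (gammaS G : ℚ) ≤ -((m : ℚ) / 6) * k := by
  obtain ⟨G, hG, hγ⟩ := exists_mConnected_gammaS_le (max m 1) (by omega)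
  refine ⟨_, G, hG.mono (le_max_left m 1), ?_⟩
  have hmM : (m : ℚ) ≤ (max m 1 : ℕ) := by exact_mod_cast le_max_left m 1
  have hγ' : (gammaS G : ℚ) ≤ -(6 * ((max m 1 : ℕ) : ℚ) ^ 2 + 3 * (max m 1 : ℕ)) := by
    exact_mod_cast hγ
  push_cast at hγ' hmM ⊢
  nlinarith [Nat.cast_nonneg (α := ℚ) m]

theorem stmt6 :
    (∀ m : ℕ, ∃ (k : ℕ) (G : SimpleGraph (Fin k)), MConnected m G ∧
      (gammaS G : ℚ) ≤ -((m : ℚ) / 6) * k) ∧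
    ¬ (∀ (k : ℕ) (G : SimpleGraph (Fin k)), 2 ≤ k → MConnected 2 G → 1 ≤ gammaS G) := by
  refine ⟨exists_mConnected_gammaS_le_neg_mul_card, fun hXu => ?_⟩
  obtain ⟨k, G, hG, hγ⟩ := exists_mConnected_gammaS_le_neg_mul_card 2
  have hk : 2 < k := by simpa using hG.1
  have hpos : (1 : ℚ) ≤ gammaS G := by exact_mod_cast hXu k G hk.le hG
  have hk' : (2 : ℚ) < k := by exact_mod_cast hk
  linarith
end

section
/- Let m ≤ n be natural numbers with m even and n odd. Then γ'_s(K_{m,n}) = min(3m, max(2m, n + 1)). -/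
open scoped Classical

/-!
Record a function `f : E(K_{m,n}) → {±1}` as the `m × n` sign matrix `g i j = f s(i, j)`. The closed
neighbourhood of an edge is its row together with its column, so the condition reads
`R i + C j - g i j ≥ 1` for the row sums `R` and column sums `C`. Every `R i` has the parity of
`n` (odd) and every `C j` that of `m` (even), so the condition improves to `≥ 2`. Summing it down
column `j` gives `T ≥ 2m + (1 - m) C j` for the total `T`, and along row `i` it gives
`T ≥ 2n + (1 - n) R i`. If all `C j ≥ 2` then `T ≥ 2n`; a column with `C j ≤ -2` gives `T ≥ 4m - 2`;
a column with `C j = 0` gives `T ≥ 2m`, and then either every `R i ≥ 3` (so `T ≥ 3m`) or some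
`R i = 1` (so `T ≥ n + 1`).

For the matching construction write `m = 2m'`, `n = 2k + 1`. Take `a` light rows with `+` on a fixed
set of `k + 1` columns (row sum 1) and `m - a` heavy rows with `k + 2` pluses each (row sum 3), so
`T = a + 3(m - a)`; the heavy rows are filled cyclically so that column `j` receives a prescribed
number `d j` of pluses, which keeps every column sum large enough. The choice
`a = m'`, `3m' - (k + 1)` or `0` gives `T = 2m`, `n + 1` or `3m`.
-/

open Finset

section CompleteBipartite

variable {α β : Type*}

def bipEdge (p : α × β) : Sym2 (α ⊕ β) := s(.inl p.1, .inr p.2)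

lemma bipEdge_injective : Function.Injective (bipEdge : α × β → Sym2 (α ⊕ β)) := by
  rintro ⟨i, j⟩ ⟨i', j'⟩ h
  simpa [bipEdge] using h

variable [Fintype α] [Fintype β]

def IsSignedDomMatrix (g : α → β → ℤ) : Prop :=
  (∀ i j, g i j = 1 ∨ g i j = -1) ∧ ∀ i j, 1 ≤ ∑ j', g i j' + ∑ i', g i' j - g i j

lemma edgeFin_completeBipartiteGraph :
    edgeFin (completeBipartiteGraph α β) = univ.map ⟨bipEdge, bipEdge_injective⟩ := by
  ext e
  induction e using Sym2.ind with
  | _ u v => cases u <;> cases v <;> simp [edgeFin, bipEdge]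

lemma sum_edgeFin_completeBipartiteGraph (f : Sym2 (α ⊕ β) → ℤ) :
    ∑ e ∈ edgeFin (completeBipartiteGraph α β), f e = ∑ i, ∑ j, f (bipEdge (i, j)) := by
  rw [edgeFin_completeBipartiteGraph, sum_map, ← Fintype.sum_prod_type']
  rfl

lemma sum_closedNbhd_bipEdge (f : Sym2 (α ⊕ β) → ℤ) (i : α) (j : β) :
    ∑ e ∈ closedNbhd (completeBipartiteGraph α β) (bipEdge (i, j)), f e =
      ∑ j', f (bipEdge (i, j')) + ∑ i', f (bipEdge (i', j)) - f (bipEdge (i, j)) := by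
  have hor (i' : α) (j' : β) (x : ℤ) : (if i = i' ∨ j = j' then x else 0) =
      (if i = i' then x else 0) + (if j = j' then x else 0) -
        (if i = i' ∧ j = j' then x else 0) := by
    split_ifs <;> simp_all
  rw [closedNbhd, sum_filter, sum_edgeFin_completeBipartiteGraph]
  simp [bipEdge, hor, sum_add_distrib, sum_sub_distrib, ite_and]

lemma isSEDF_completeBipartiteGraph_iff (f : Sym2 (α ⊕ β) → ℤ) :
    IsSEDF (completeBipartiteGraph α β) f ↔ IsSignedDomMatrix fun i j => f (bipEdge (i, j)) := by
  rw [IsSEDF, IsSignedDomMatrix, edgeFin_completeBipartiteGraph]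
  simp only [forall_mem_map, mem_univ, forall_const, Prod.forall, Function.Embedding.coeFn_mk,
    sum_closedNbhd_bipEdge]

lemma gammaS_completeBipartiteGraph :
    gammaS (completeBipartiteGraph α β) =
      sInf {z | ∃ g : α → β → ℤ, IsSignedDomMatrix g ∧ z = ∑ i, ∑ j, g i j} := by
  rw [gammaS]
  congr 1
  ext z
  constructor
  · rintro ⟨f, hf, rfl⟩
    exact ⟨_, (isSEDF_completeBipartiteGraph_iff f).1 hf, sum_edgeFin_completeBipartiteGraph f⟩
  · rintro ⟨g, hg, rfl⟩
    let F : α ⊕ β → α ⊕ β → ℤ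
      | .inl i, .inr j | .inr j, .inl i => g i j
      | _, _ => 0
    let f := Sym2.lift ⟨F, fun u v => by cases u <;> cases v <;> rfl⟩
    exact ⟨f, (isSEDF_completeBipartiteGraph_iff f).2 hg,
      (sum_edgeFin_completeBipartiteGraph f).symm⟩

end CompleteBipartite

section SignSums

variable {ι : Type*} [Fintype ι]

lemma sum_ite_one_neg_one (p : ι → Prop) [DecidablePred p] :
    ∑ x, (if p x then (1 : ℤ) else -1) = 2 * #{x | p x} - Fintype.card ι := by
  rw [sum_ite, sum_const, sum_const, ← card_univ, ← card_filter_add_card_filter_not (s := univ) p]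
  simp only [nsmul_eq_mul, mul_one, mul_neg]
  push_cast
  ring

lemma sum_eq_two_mul_card_sub_card (f : ι → ℤ) (hf : ∀ x, f x = 1 ∨ f x = -1) :
    ∑ x, f x = 2 * #{x | f x = 1} - Fintype.card ι := by
  rw [← sum_ite_one_neg_one (fun x => f x = 1)]
  refine sum_congr rfl fun x _ => ?_
  rcases hf x with h | h <;> simp [h]

end SignSums

section LowerBound

variable {α β : Type*} [Fintype α] [Fintype β] {g : α → β → ℤ}

lemma IsSignedDomMatrix.two_le (hg : IsSignedDomMatrix g) (hα : Even (Fintype.card α))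
    (hβ : Odd (Fintype.card β)) (i : α) (j : β) :
    2 ≤ ∑ j', g i j' + ∑ i', g i' j - g i j := by
  have hrow := sum_eq_two_mul_card_sub_card (g i) (hg.1 i)
  have hcol := sum_eq_two_mul_card_sub_card (fun i' => g i' j) (fun i' => hg.1 i' j)
  obtain ⟨a, ha⟩ := hα
  obtain ⟨b, hb⟩ := hβ
  have := hg.2 i j
  rcases hg.1 i j with h | h <;> omega

lemma two_mul_card_add_le_sum (h : ∀ i j, 2 ≤ ∑ j', g i j' + ∑ i', g i' j - g i j) (j : β) :
    2 * Fintype.card α + (1 - Fintype.card α) * ∑ i, g i j ≤ ∑ i, ∑ j', g i j' :=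
  calc 2 * Fintype.card α + (1 - Fintype.card α) * ∑ i, g i j
      = ∑ i, (2 + g i j - ∑ i', g i' j) := by
        simp only [sum_sub_distrib, sum_add_distrib, sum_const, card_univ, nsmul_eq_mul]
        ring
    _ ≤ ∑ i, ∑ j', g i j' := sum_le_sum fun i _ => by linarith [h i j]

lemma IsSignedDomMatrix.le_sum_of_colSum_eq_zero (hg : IsSignedDomMatrix g)
    (hα : Even (Fintype.card α)) (hβ : Odd (Fintype.card β)) {j : β} (hj : ∑ i, g i j = 0) :
    min (3 * (Fintype.card α : ℤ)) (max (2 * Fintype.card α) (Fintype.card β + 1)) ≤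
      ∑ i, ∑ j, g i j := by
  have key := hg.two_le hα hβ
  have h2m : 2 * (Fintype.card α : ℤ) ≤ ∑ i, ∑ j, g i j := by
    simpa [hj] using two_mul_card_add_le_sum key j
  by_cases hrow : ∀ i, 3 ≤ ∑ j, g i j
  · refine min_le_of_left_le ?_
    simpa [mul_comm] using card_nsmul_le_sum univ _ 3 fun i _ => hrow i
  push Not at hrow
  obtain ⟨i, hi⟩ := hrow
  have hRi := sum_eq_two_mul_card_sub_card (g i) (hg.1 i)
  obtain ⟨b, hb⟩ := hβ
  have hone : ∑ j, g i j = 1 := by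
    have := key i j
    rcases hg.1 i j with h | h <;> omega
  have hn1 : (Fintype.card β : ℤ) + 1 ≤ ∑ i, ∑ j, g i j := by
    have := two_mul_card_add_le_sum (g := fun j i => g i j) (fun j i => by linarith [key i j]) i
    rw [hone, sum_comm] at this
    linarith
  exact min_le_of_right_le (max_le h2m hn1)

theorem IsSignedDomMatrix.le_sum (hg : IsSignedDomMatrix g)
    (hαβ : Fintype.card α ≤ Fintype.card β) (hα : Even (Fintype.card α))
    (hβ : Odd (Fintype.card β)) :
    min (3 * (Fintype.card α : ℤ)) (max (2 * Fintype.card α) (Fintype.card β + 1)) ≤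
      ∑ i, ∑ j, g i j := by
  obtain hα0 | hα2 : Fintype.card α = 0 ∨ 2 ≤ Fintype.card α := by
    obtain ⟨a, ha⟩ := hα
    omega
  · have : IsEmpty α := Fintype.card_eq_zero_iff.mp hα0
    simp
  by_cases hcol : ∀ j, 2 ≤ ∑ i, g i j
  · have : 2 * (Fintype.card β : ℤ) ≤ ∑ i, ∑ j, g i j := by
      rw [sum_comm]
      simpa [mul_comm] using card_nsmul_le_sum univ _ 2 fun j _ => hcol j
    obtain ⟨b, hb⟩ := hβ
    exact min_le_of_right_le (max_le (by omega) (by omega)) |>.trans this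
  push Not at hcol
  obtain ⟨j, hj⟩ := hcol
  have hCj := sum_eq_two_mul_card_sub_card (fun i => g i j) (fun i => hg.1 i j)
  obtain hneg | hzero : ∑ i, g i j ≤ -2 ∨ ∑ i, g i j = 0 := by
    obtain ⟨a, ha⟩ := hα
    omega
  · have := two_mul_card_add_le_sum (hg.two_le hα hβ) j
    refine min_le_of_left_le ?_
    nlinarith
  · exact hg.le_sum_of_colSum_eq_zero hα hβ hzero

end LowerBound

section Design

/- Column `j` occupies the `d j ≤ M` consecutive positions after `∑_{j' < j} d j'` in
`Fin (M * K)`, and position `t` goes to row `t % M`. -/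
theorem Fin.exists_finset_card_eq_of_degrees {N : ℕ} (M K : ℕ) (d : Fin N → ℕ)
    (hd : ∀ j, d j ≤ M) (hsum : ∑ j, d j = M * K) :
    ∃ A : Fin M → Finset (Fin N), (∀ i, #(A i) = K) ∧ ∀ j, #{i | j ∈ A i} = d j := by
  let e : (Σ j, Fin (d j)) ≃ Fin K × Fin M :=
    finSigmaFinEquiv.trans ((finCongr (hsum.trans (mul_comm M K))).trans finProdFinEquiv.symm)
  let row : (Σ j, Fin (d j)) → Fin M := fun p => (e p).2
  have row_inj (j : Fin N) : Function.Injective fun x : Fin (d j) => row ⟨j, x⟩ := by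
    intro x y hxy
    simp only [row, e, Fin.ext_iff, Equiv.trans_apply, finProdFinEquiv_symm_apply,
      Fin.coe_modNat, finCongr_apply, Fin.val_cast, finSigmaFinEquiv_apply] at hxy
    have := hd j
    exact Fin.ext <| by
      simpa using Nat.mod_injOn_Ico (∑ i : Fin j, d (Fin.castLE j.2.le i)) M
        (by simp only [coe_Ico, Set.mem_Ico]; omega)
        (by simp only [coe_Ico, Set.mem_Ico]; omega) hxy
  refine ⟨fun i => ({p | row p = i} : Finset _).image Sigma.fst, fun i => ?_, fun j => ?_⟩
  · rw [card_image_of_injOn]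
    · calc #{p | row p = i} = #{q : Fin K × Fin M | q.2 = i} := card_equiv e (by simp [row])
        _ = K := by rw [card_filter, Fintype.sum_prod_type]; simp
    · rintro ⟨j, x⟩ hx ⟨j', y⟩ hy (rfl : j = j')
      simp only [coe_filter, mem_univ, true_and, Set.mem_ofPred_eq] at hx hy
      rw [row_inj j (hx.trans hy.symm)]
  · have : ({i | j ∈ ({p | row p = i} : Finset _).image Sigma.fst} : Finset (Fin M)) =
        univ.image fun x => row ⟨j, x⟩ := by
      ext i
      simp [Sigma.exists]
    rw [this, card_image_of_injective _ (row_inj j), card_univ, Fintype.card_fin]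

theorem exists_finset_card_eq_of_degrees {β : Type*} [Fintype β] [DecidableEq β] (M K : ℕ)
    (d : β → ℕ) (hd : ∀ j, d j ≤ M) (hsum : ∑ j, d j = M * K) :
    ∃ A : Fin M → Finset β, (∀ i, #(A i) = K) ∧ ∀ j, #{i | j ∈ A i} = d j := by
  let e := Fintype.equivFin β
  obtain ⟨A, hA, hdA⟩ := Fin.exists_finset_card_eq_of_degrees M K (d ∘ e.symm) (fun j => hd _)
    (by rw [← hsum]; exact e.symm.sum_comp d)
  refine ⟨fun i => (A i).map e.symm.toEmbedding, fun i => by simp [hA], fun j => ?_⟩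
  simpa [mem_map_equiv] using hdA (e j)

end Design

section Construction

variable {α β : Type*} [Fintype α] [Fintype β]

lemma IsSignedDomMatrix.comp_equiv {α' β' : Type*} [Fintype α'] [Fintype β'] {g : α → β → ℤ}
    (hg : IsSignedDomMatrix g) (e : α' ≃ α) (e' : β' ≃ β) :
    IsSignedDomMatrix fun i j => g (e i) (e' j) := by
  refine ⟨fun i j => hg.1 _ _, fun i j => ?_⟩
  rw [e'.sum_comp (g (e i)), e.sum_comp fun i' => g i' (e' j)]
  exact hg.2 _ _

/- Rows `inl _` are `+` exactly on the columns `inl _` (row sum 1) and rows `inr _` come from the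
design with column degrees `d` (row sum 3), so column `j` sums to `±a + 2 d j - M`. -/
theorem exists_isSignedDomMatrix_of_degrees (a M k : ℕ) (d : Fin (k + 1) ⊕ Fin k → ℕ)
    (hd : ∀ j, d j ≤ M) (hsum : ∑ j, d j = M * (k + 2))
    (hlight : 0 < a → ∀ j, a + M < 2 * (a + d (.inl j)))
    (hleft : ∀ j, a + M ≤ 2 * (a + d (.inl j)) + 1)
    (hright : ∀ j, a + M ≤ 2 * d (.inr j) + 1) :
    ∃ g : Fin a ⊕ Fin M → Fin (k + 1) ⊕ Fin k → ℤ,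
      IsSignedDomMatrix g ∧ ∑ i, ∑ j, g i j = a + 3 * M := by
  obtain ⟨A, hA, hdA⟩ := exists_finset_card_eq_of_degrees M (k + 2) d hd hsum
  let S : Fin a ⊕ Fin M → Finset (Fin (k + 1) ⊕ Fin k)
    | .inl _ => univ.map .inl
    | .inr r => A r
  let g i j : ℤ := if j ∈ S i then 1 else -1
  have hsign (i j) : g i j = 1 ∨ g i j = -1 := by
    unfold g
    split_ifs <;> simp
  have hlight_inl (i : Fin a) (j) : g (.inl i) (.inl j) = 1 := by simp [g, S]
  have hlight_inr (i : Fin a) (j) : g (.inl i) (.inr j) = -1 := by simp [g, S]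
  have hrow_inl (i : Fin a) : ∑ j, g (.inl i) j = 1 := by
    rw [sum_ite_one_neg_one, filter_univ_mem]
    simp only [card_map, card_univ, Fintype.card_fin, Fintype.card_sum, S]
    push_cast
    ring
  have hrow_inr (r : Fin M) : ∑ j, g (.inr r) j = 3 := by
    rw [sum_ite_one_neg_one, filter_univ_mem]
    simp only [hA, Fintype.card_sum, Fintype.card_fin, S]
    push_cast
    ring
  have hcol (j) : ∑ i, g i j = ∑ i : Fin a, g (.inl i) j + (2 * d j - M) := by
    rw [Fintype.sum_sum_type, add_right_inj, ← hdA j]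
    exact sum_ite_one_neg_one (j ∈ A ·) |>.trans (by simp)
  refine ⟨g, ⟨hsign, fun i j => ?_⟩, ?_⟩
  · rw [hcol]
    rcases i with i | r <;> rcases j with j | j <;>
      simp only [hrow_inl, hrow_inr, hlight_inl, hlight_inr, sum_const, card_univ,
        Fintype.card_fin, nsmul_eq_mul, mul_one, mul_neg]
    · have := hlight i.pos j
      omega
    · have := hright j
      omega
    · have := hleft j
      rcases hsign (.inr r) (.inl j) with h | h <;> omega
    · have := hright j
      rcases hsign (.inr r) (.inr j) with h | h <;> omega
  · rw [Fintype.sum_sum_type]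
    simp only [hrow_inl, hrow_inr, sum_const, card_univ, Fintype.card_fin, nsmul_eq_mul]
    ring

theorem exists_isSignedDomMatrix_sum_eq_four_mul (m' k : ℕ) (h₁ : m' ≤ k) (h₂ : k + 1 ≤ 2 * m') :
    ∃ g : Fin m' ⊕ Fin m' → Fin (k + 1) ⊕ Fin k → ℤ,
      IsSignedDomMatrix g ∧ ∑ i, ∑ j, g i j = 4 * m' := by
  obtain ⟨g, hg, hsum⟩ := exists_isSignedDomMatrix_of_degrees m' m' k
    (Sum.elim (fun j => if j = Fin.last k then 2 * m' - k else 1) fun _ => m')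
    (by rintro (j | j) <;> simp only [Sum.elim_inl, Sum.elim_inr] <;> (try split_ifs) <;> omega)
    (by
      rw [Fintype.sum_sum_type, Fin.sum_univ_castSucc]
      simp only [Sum.elim_inl, Sum.elim_inr, Fin.castSucc_ne_last, if_true, if_false, sum_const,
        card_univ, Fintype.card_fin, smul_eq_mul, mul_one]
      zify [show k ≤ 2 * m' by omega]
      ring)
    (fun _ j => by simp only [Sum.elim_inl]; split_ifs <;> omega)
    (fun j => by simp only [Sum.elim_inl]; split_ifs <;> omega)
    (fun j => by simp only [Sum.elim_inr]; omega)
  exact ⟨g, hg, by rw [hsum]; ring⟩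

theorem exists_isSignedDomMatrix_sum_eq_two_mul_add_two (m' k : ℕ) (h₁ : 2 * m' ≤ k + 1)
    (h₂ : k + 1 ≤ 3 * m') :
    ∃ g : Fin (3 * m' - (k + 1)) ⊕ Fin (k + 1 - m') → Fin (k + 1) ⊕ Fin k → ℤ,
      IsSignedDomMatrix g ∧ ∑ i, ∑ j, g i j = 2 * k + 2 := by
  obtain ⟨g, hg, hsum⟩ := exists_isSignedDomMatrix_of_degrees (3 * m' - (k + 1)) (k + 1 - m') k
    (Sum.elim (fun _ => k + 2 - 2 * m') fun _ => m')
    (by rintro (j | j) <;> simp only [Sum.elim_inl, Sum.elim_inr] <;> omega)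
    (by
      simp only [Fintype.sum_sum_type, Sum.elim_inl, Sum.elim_inr, sum_const, card_univ,
        Fintype.card_fin, smul_eq_mul]
      zify [show 2 * m' ≤ k + 2 by omega, show m' ≤ k + 1 by omega]
      ring)
    (fun _ j => by simp only [Sum.elim_inl]; omega)
    (fun j => by simp only [Sum.elim_inl]; omega)
    (fun j => by simp only [Sum.elim_inr]; omega)
  exact ⟨g, hg, by rw [hsum]; omega⟩

theorem exists_isSignedDomMatrix_sum_eq_six_mul (m' k : ℕ) (h : 3 * m' ≤ k + 1) :
    ∃ g : Fin 0 ⊕ Fin (2 * m') → Fin (k + 1) ⊕ Fin k → ℤ,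
      IsSignedDomMatrix g ∧ ∑ i, ∑ j, g i j = 6 * m' := by
  obtain ⟨g, hg, hsum⟩ := exists_isSignedDomMatrix_of_degrees 0 (2 * m') k
    (Sum.elim (fun j => m' + if (j : ℕ) < 3 * m' then 1 else 0) fun _ => m')
    (by rintro (j | j) <;> simp only [Sum.elim_inl, Sum.elim_inr] <;> (try split_ifs) <;> omega)
    (by
      simp only [Fintype.sum_sum_type, Sum.elim_inl, Sum.elim_inr, sum_add_distrib, sum_const,
        card_univ, Fintype.card_fin, smul_eq_mul, sum_boole, Fin.card_filter_val_lt, Nat.cast_id,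
        min_eq_right h]
      ring)
    (by simp)
    (fun j => by simp only [Sum.elim_inl]; omega)
    (fun j => by simp only [Sum.elim_inr]; omega)
  exact ⟨g, hg, by rw [hsum]; push_cast; ring⟩

theorem exists_isSignedDomMatrix_sum_eq (hαβ : Fintype.card α ≤ Fintype.card β)
    (hα : Even (Fintype.card α)) (hβ : Odd (Fintype.card β)) :
    ∃ g : α → β → ℤ, IsSignedDomMatrix g ∧ ∑ i, ∑ j, g i j =
      min (3 * (Fintype.card α : ℤ)) (max (2 * Fintype.card α) (Fintype.card β + 1)) := by
  obtain ⟨m', hm'⟩ := hα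
  obtain ⟨k, hk⟩ := hβ
  obtain ⟨a, M, haM, g, hg, hsum⟩ : ∃ a M, a + M = Fintype.card α ∧
      ∃ g : Fin a ⊕ Fin M → Fin (k + 1) ⊕ Fin k → ℤ, IsSignedDomMatrix g ∧ ∑ i, ∑ j, g i j =
        min (3 * (Fintype.card α : ℤ)) (max (2 * Fintype.card α) (Fintype.card β + 1)) := by
    rw [hm', hk]
    rcases le_or_gt (k + 1) (2 * m') with hA | hA
    · obtain ⟨g, hg, hsum⟩ := exists_isSignedDomMatrix_sum_eq_four_mul m' k (by omega) hA
      exact ⟨m', m', rfl, g, hg, by rw [hsum]; omega⟩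
    rcases le_or_gt (k + 1) (3 * m') with hB | hC
    · obtain ⟨g, hg, hsum⟩ := exists_isSignedDomMatrix_sum_eq_two_mul_add_two m' k hA.le hB
      exact ⟨_, _, by omega, g, hg, by rw [hsum]; omega⟩
    · obtain ⟨g, hg, hsum⟩ := exists_isSignedDomMatrix_sum_eq_six_mul m' k hC.le
      exact ⟨_, _, by omega, g, hg, by rw [hsum]; omega⟩
  let e : α ≃ Fin a ⊕ Fin M := Fintype.equivOfCardEq (by simp [haM])
  let e' : β ≃ Fin (k + 1) ⊕ Fin k := Fintype.equivOfCardEq (by simp [hk]; ring)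
  refine ⟨fun i j => g (e i) (e' j), hg.comp_equiv e e', ?_⟩
  rw [← hsum]
  exact Fintype.sum_equiv e _ _ fun i => Fintype.sum_equiv e' _ _ fun j => rfl

theorem isLeast_sum_isSignedDomMatrix (hαβ : Fintype.card α ≤ Fintype.card β)
    (hα : Even (Fintype.card α)) (hβ : Odd (Fintype.card β)) :
    IsLeast {z | ∃ g : α → β → ℤ, IsSignedDomMatrix g ∧ z = ∑ i, ∑ j, g i j}
      (min (3 * (Fintype.card α : ℤ)) (max (2 * Fintype.card α) (Fintype.card β + 1))) := by
  refine ⟨?_, ?_⟩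
  · obtain ⟨g, hg, hsum⟩ := exists_isSignedDomMatrix_sum_eq hαβ hα hβ
    exact ⟨g, hg, hsum.symm⟩
  · rintro z ⟨g, hg, rfl⟩
    exact hg.le_sum hαβ hα hβ

end Construction

theorem stmt15 (m n : ℕ) (hmn : m ≤ n) (hm : Even m) (hn : Odd n) :
    gammaS (completeBipartiteGraph (Fin m) (Fin n)) =
      min (3 * (m : ℤ)) (max (2 * (m : ℤ)) ((n : ℤ) + 1)) := by
  rw [gammaS_completeBipartiteGraph]
  simpa using (isLeast_sum_isSignedDomMatrix (α := Fin m) (β := Fin n)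
    (by simpa) (by simpa) (by simpa)).csInf_eq
end
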